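/- arXiv:1903.03753 — 2 statements merged into one kernel-verified Lean document; each statement's English description precedes it below -/
import Mathlib

section
/- In the setting of Lemma 1 of the paper: with independent X_n satisfying the flat-threshold F^α-scheme (F_n = F^{α_n} on (ℓ,∞), δ_n = 0), setting h = F(ℓ), b_m = P(I_m = 1, M_m ≤ ℓ), one has P(I_m = 1) = (α_m/s_m)(1 − h^{s_m}) + b_m, and hence P(I_m = 1) = α_m/s_m + θ_m with |θ_m| ≤ h^{s_m}. -/
/-!
Split the record event according to whether `X m > ℓ`. If not, it lies in `{M m ≤ ℓ}`, which by
independence has probability `∏_{k ≤ m} F(ℓ)^{α k} = h^{s m}`. If so, Fubini for the independent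
pair `X m`, `(X j)_{j<m}` gives `∫_{z > ℓ} F(z)^c dF^{α m}(z)` with `c = s m - α m`. The law of
`X m` restricted to `(ℓ, ∞)` is pushed forward by its continuous distribution function `F^{α m}`
to Lebesgue measure on `(h^{α m}, 1]` (probability integral transform), so the integral equals
`∫ u^{c / α m} du = (α m / s m)(1 - h^{s m})`.
-/

open MeasureTheory ProbabilityTheory Filter Set

lemma Monotone.exists_preimage_Iic_eq_Iic {G : ℝ → ℝ} (hmono : Monotone G) (hcont : Continuous G)
    {a b u : ℝ} (ha : G a ≤ u) (hb : u < G b) : ∃ T, a ≤ T ∧ G T = u ∧ G ⁻¹' Iic u = Iic T := by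
  obtain ⟨c, -, hGc⟩ := intermediate_value_Icc (hmono.reflect_lt (ha.trans_lt hb)).le
    hcont.continuousOn ⟨ha, hb.le⟩
  have hbdd : BddAbove (G ⁻¹' Iic u) := ⟨b, fun x hx => (hmono.reflect_lt (hx.trans_lt hb)).le⟩
  have hT : sSup (G ⁻¹' Iic u) ∈ G ⁻¹' Iic u :=
    (isClosed_Iic.preimage hcont).csSup_mem ⟨a, ha⟩ hbdd
  refine ⟨_, le_csSup hbdd ha, le_antisymm hT ?_, ?_⟩
  · calc u = G c := hGc.symm
      _ ≤ _ := hmono (le_csSup hbdd hGc.le)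
  ext x
  exact ⟨fun hx => le_csSup hbdd hx, fun hx => (hmono hx).trans hT⟩

lemma lintegral_Ioc_ofReal_rpow {a b p : ℝ} (ha : 0 ≤ a) (hab : a ≤ b) (hp : -1 < p) :
    ∫⁻ u in Ioc a b, ENNReal.ofReal (u ^ p)
      = ENNReal.ofReal ((b ^ (p + 1) - a ^ (p + 1)) / (p + 1)) := by
  have hint : IntegrableOn (fun u => u ^ p) (Ioc a b) :=
    (intervalIntegrable_iff_integrableOn_Ioc_of_le hab).1
      (intervalIntegral.intervalIntegrable_rpow' hp)
  have hnn : 0 ≤ᵐ[volume.restrict (Ioc a b)] fun u => u ^ p :=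
    (ae_restrict_iff' measurableSet_Ioc).2
      (ae_of_all _ fun u hu => Real.rpow_nonneg (ha.trans hu.1.le) p)
  rw [← ofReal_integral_eq_lintegral_ofReal hint hnn, ← intervalIntegral.integral_of_le hab,
    integral_rpow (Or.inl hp)]

lemma ENNReal.prod_ofReal_rpow {ι : Type*} (s : Finset ι) {x : ℝ} (hx : 0 ≤ x) {a : ι → ℝ}
    (ha : ∀ i ∈ s, 0 ≤ a i) :
    ∏ i ∈ s, ENNReal.ofReal (x ^ a i) = ENNReal.ofReal (x ^ ∑ i ∈ s, a i) := by
  rw [Real.rpow_sum_of_nonneg hx ha, ENNReal.ofReal_prod_of_nonneg fun i _ => Real.rpow_nonneg hx _]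

namespace ProbabilityTheory

section cdf

variable (ν : Measure ℝ) [IsProbabilityMeasure ν]

lemma measure_Ioc_eq_ofReal_cdf_sub (a b : ℝ) :
    ν (Ioc a b) = ENNReal.ofReal (cdf ν b - cdf ν a) := by
  rw [← (cdf ν).measure_Ioc, measure_cdf]

lemma measure_Ioi_eq_ofReal_one_sub_cdf (a : ℝ) :
    ν (Ioi a) = ENNReal.ofReal (1 - cdf ν a) := by
  rw [← (cdf ν).measure_Ioi (tendsto_cdf_atTop ν), measure_cdf]

lemma measure_Iio_eq_ofReal_leftLim_cdf (a : ℝ) :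
    ν (Iio a) = ENNReal.ofReal (Function.leftLim (cdf ν) a) := by
  simpa [measure_cdf] using (cdf ν).measure_Iio (tendsto_cdf_atBot ν) a

end cdf

variable {ν : Measure ℝ} {G : ℝ → ℝ} {ℓ : ℝ}

lemma eqOn_cdf_Ici_of_eqOn_Ioi (hG : ContinuousWithinAt G (Ioi ℓ) ℓ)
    (h : EqOn (cdf ν) G (Ioi ℓ)) : EqOn (cdf ν) G (Ici ℓ) := by
  intro x hx
  rcases (mem_Ici.1 hx).eq_or_lt with rfl | hx
  · exact tendsto_nhds_unique (((cdf ν).right_continuous _).mono Ioi_subset_Ici_self)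
      (hG.tendsto.congr' (eventually_nhdsWithin_of_forall fun y hy => (h hy).symm))
  · exact h hx

lemma measure_Iio_eq_ofReal_of_cdf_eventuallyEq [IsProbabilityMeasure ν] {x : ℝ}
    (hG : ContinuousAt G x) (h : cdf ν =ᶠ[nhds x] G) : ν (Iio x) = ENNReal.ofReal (G x) := by
  rw [measure_Iio_eq_ofReal_leftLim_cdf, (hG.congr h.symm).continuousWithinAt.leftLim_eq,
    h.eq_of_nhds]

variable [IsProbabilityMeasure ν]

theorem map_restrict_Ioi_eq_volume_restrict_Ioc (hGmono : Monotone G) (hGcont : Continuous G)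
    (hG : EqOn (cdf ν) G (Ici ℓ)) :
    (ν.restrict (Ioi ℓ)).map G = volume.restrict (Ioc (G ℓ) 1) := by
  have hcdfℓ : cdf ν ℓ = G ℓ := hG (le_refl ℓ)
  have : IsFiniteMeasure (volume.restrict (Ioc (G ℓ) 1)) :=
    isFiniteMeasure_restrict.2 measure_Ioc_lt_top.ne
  refine Measure.ext_of_Iic _ _ fun u => ?_
  rw [Measure.map_apply hGcont.measurable measurableSet_Iic,
    Measure.restrict_apply (hGcont.measurable measurableSet_Iic),
    Measure.restrict_apply measurableSet_Iic, inter_comm (Iic u), Ioc_inter_Iic, Real.volume_Ioc]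
  rcases lt_or_ge u (G ℓ) with hu | hu
  · have hempty : G ⁻¹' Iic u ∩ Ioi ℓ = ∅ :=
      eq_empty_of_forall_notMem fun x hx => (hu.trans_le (hGmono (mem_Ioi.1 hx.2).le)).not_ge hx.1
    rw [hempty, measure_empty, ENNReal.ofReal_of_nonpos (by linarith [min_le_right 1 u])]
  rcases lt_or_ge u 1 with hu1 | hu1
  · obtain ⟨b, hub, hℓb⟩ :=
      (((tendsto_cdf_atTop ν).eventually (lt_mem_nhds hu1)).and (eventually_ge_atTop ℓ)).exists
    obtain ⟨T, hℓT, hGT, hpre⟩ :=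
      hGmono.exists_preimage_Iic_eq_Iic hGcont hu (hG hℓb ▸ hub)
    rw [hpre, Iic_inter_Ioi, measure_Ioc_eq_ofReal_cdf_sub, hG hℓT, hcdfℓ, hGT, min_eq_right hu1.le]
  · have hG_le_one : ∀ x, G x ≤ 1 := fun x =>
      (hGmono (le_max_left x ℓ)).trans ((hG (le_max_right x ℓ)) ▸ cdf_le_one ν _)
    have hpre : G ⁻¹' Iic u = univ := eq_univ_of_forall fun x => (hG_le_one x).trans hu1
    rw [hpre, univ_inter, measure_Ioi_eq_ofReal_one_sub_cdf, hcdfℓ, min_eq_left hu1]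

lemma lintegral_Ioi_ofReal_rpow_of_eqOn_cdf_rpow {F : ℝ → ℝ} (hFmono : Monotone F)
    (hFcont : Continuous F) (hFnn : ∀ x, 0 ≤ F x) {a c : ℝ} (ha : 0 < a) (hc : 0 ≤ c)
    (hG : EqOn (cdf ν) (fun x => F x ^ a) (Ici ℓ)) :
    ∫⁻ x in Ioi ℓ, ENNReal.ofReal (F x ^ c) ∂ν
      = ENNReal.ofReal (a / (c + a) * (1 - F ℓ ^ (c + a))) := by
  set G : ℝ → ℝ := fun x => F x ^ a
  have hGmono : Monotone G := fun x y hxy => Real.rpow_le_rpow (hFnn x) (hFmono hxy) ha.le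
  have hGcont : Continuous G := hFcont.rpow_const fun _ => Or.inr ha.le
  have hGℓ : G ℓ ≤ 1 := hG (le_refl ℓ) ▸ cdf_le_one ν ℓ
  have hpow : ∀ x q, G x ^ q = F x ^ (a * q) := fun x q => (Real.rpow_mul (hFnn x) a q).symm
  have hmeas : Measurable fun u : ℝ => ENNReal.ofReal (u ^ (c / a)) :=
    ENNReal.measurable_ofReal.comp (measurable_id.pow_const _)
  calc ∫⁻ x in Ioi ℓ, ENNReal.ofReal (F x ^ c) ∂ν
      = ∫⁻ x in Ioi ℓ, ENNReal.ofReal (G x ^ (c / a)) ∂ν := by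
        simp only [hpow, mul_div_cancel₀ c ha.ne']
    _ = ∫⁻ u in Ioc (G ℓ) 1, ENNReal.ofReal (u ^ (c / a)) := by
        rw [← map_restrict_Ioi_eq_volume_restrict_Ioc hGmono hGcont hG,
          lintegral_map hmeas hGcont.measurable]
    _ = ENNReal.ofReal (a / (c + a) * (1 - F ℓ ^ (c + a))) := by
        rw [lintegral_Ioc_ofReal_rpow (Real.rpow_nonneg (hFnn ℓ) a) hGℓ
          (by have := div_nonneg hc ha.le; linarith), Real.one_rpow, hpow]
        congr 1
        field_simp

lemma IndepFun.measure_preimage_prodMk_eq_lintegral {Ω α β : Type*} [MeasurableSpace Ω]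
    [MeasurableSpace α] [MeasurableSpace β] {P : Measure Ω} [IsFiniteMeasure P]
    {Y : Ω → α} {Z : Ω → β} (hYZ : IndepFun Y Z P) (hY : Measurable Y) (hZ : Measurable Z)
    {S : Set (α × β)} (hS : MeasurableSet S) :
    P ((fun ω => (Y ω, Z ω)) ⁻¹' S) = ∫⁻ y, P (Z ⁻¹' (Prod.mk y ⁻¹' S)) ∂(P.map Y) := by
  rw [← Measure.map_apply (hY.prodMk hZ) hS,
    (indepFun_iff_map_prod_eq_prod_map_map hY.aemeasurable hZ.aemeasurable).1 hYZ,
    Measure.prod_apply hS]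
  refine lintegral_congr fun y => ?_
  rw [Measure.map_apply hZ (measurable_prodMk_left hS)]

section Records

variable {Ω : Type*} [MeasurableSpace Ω] {P : Measure Ω} {X : ℕ → Ω → ℝ}

lemma iIndepFun.measure_biInter_preimage_eq_prod_map (hindep : iIndepFun X P)
    (hX : ∀ n, Measurable (X n)) (S : Finset ℕ) {t : Set ℝ} (ht : MeasurableSet t) :
    P (⋂ j ∈ S, X j ⁻¹' t) = ∏ j ∈ S, P.map (X j) t := by
  rw [hindep.measure_inter_preimage_eq_mul S fun _ _ => ht]
  exact Finset.prod_congr rfl fun j _ => (Measure.map_apply (hX j) ht).symm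

lemma iIndepFun.measure_record_inter_gt_eq_lintegral [IsProbabilityMeasure P]
    (hindep : iIndepFun X P) (hX : ∀ n, Measurable (X n)) (m : ℕ) (ℓ : ℝ) :
    P ({ω | ∀ j < m, X j ω < X m ω} ∩ {ω | ℓ < X m ω})
      = ∫⁻ z in Ioi ℓ, ∏ j ∈ Finset.range m, P.map (X j) (Iio z) ∂(P.map (X m)) := by
  set Z : Ω → Finset.range m → ℝ := fun ω j => X j ω
  have hZ : Measurable Z := measurable_pi_lambda _ fun j => hX j
  have hindep' : IndepFun (X m) Z P :=
    (hindep.indepFun_finset {m} (Finset.range m) (by simp) hX).comp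
      (measurable_pi_apply (⟨m, Finset.mem_singleton_self m⟩ : ({m} : Finset ℕ))) measurable_id
  set S : Set (ℝ × (Finset.range m → ℝ)) := {p | (∀ j, p.2 j < p.1) ∧ ℓ < p.1}
  have hS : MeasurableSet S := by
    simp only [S, ofPred_and, ofPred_forall]
    exact (MeasurableSet.iInter fun j =>
      measurableSet_lt ((measurable_pi_apply j).comp measurable_snd) measurable_fst).inter
      (measurableSet_lt measurable_const measurable_fst)
  have hsection : ∀ z, P (Z ⁻¹' (Prod.mk z ⁻¹' S))
      = (Ioi ℓ).indicator (fun z => ∏ j ∈ Finset.range m, P.map (X j) (Iio z)) z := by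
    intro z
    by_cases hz : ℓ < z
    · rw [indicator_of_mem (mem_Ioi.2 hz),
        ← hindep.measure_biInter_preimage_eq_prod_map hX _ measurableSet_Iio]
      congr 1
      ext ω
      simp [Z, S, hz]
    · rw [indicator_of_notMem (mt mem_Ioi.1 hz)]
      simp [S, hz]
  have hset : {ω | ∀ j < m, X j ω < X m ω} ∩ {ω | ℓ < X m ω} = (fun ω => (X m ω, Z ω)) ⁻¹' S := by
    ext ω
    simp [Z, S]
  rw [hset, hindep'.measure_preimage_prodMk_eq_lintegral (hX m) hZ hS,
    lintegral_congr hsection, lintegral_indicator measurableSet_Ioi]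

lemma eqOn_cdf_map_Ici_of_forall_gt {G : ℝ → ℝ} {ℓ : ℝ} {Y : Ω → ℝ} [IsProbabilityMeasure P]
    (hG : Continuous G) (hY : Measurable Y)
    (hdf : ∀ x, ℓ < x → (P {ω | Y ω ≤ x}).toReal = G x) :
    EqOn (cdf (P.map Y)) G (Ici ℓ) := by
  have := Measure.isProbabilityMeasure_map (μ := P) hY.aemeasurable
  refine eqOn_cdf_Ici_of_eqOn_Ioi hG.continuousWithinAt fun x hx => ?_
  rw [cdf_eq_real, map_measureReal_apply hY measurableSet_Iic]
  exact hdf x hx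

variable [IsProbabilityMeasure P] {F : ℝ → ℝ} {α : ℕ → ℝ} {ℓ : ℝ}

lemma measureReal_forall_le_eq_rpow_sum (hFnn : ∀ x, 0 ≤ F x) (hα : ∀ n, 0 < α n)
    (hX : ∀ n, Measurable (X n)) (hindep : iIndepFun X P)
    (hcdf : ∀ n, EqOn (cdf (P.map (X n))) (fun x => F x ^ α n) (Ici ℓ)) (m : ℕ) :
    P.real {ω | ∀ k ≤ m, X k ω ≤ ℓ} = F ℓ ^ ∑ k ∈ Finset.range (m + 1), α k := by
  have hlaw (n : ℕ) := Measure.isProbabilityMeasure_map (μ := P) (hX n).aemeasurable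
  have hset : {ω | ∀ k ≤ m, X k ω ≤ ℓ} = ⋂ k ∈ Finset.range (m + 1), X k ⁻¹' Iic ℓ := by
    ext ω
    simp
  rw [measureReal_def, hset, hindep.measure_biInter_preimage_eq_prod_map hX _ measurableSet_Iic,
    ← ENNReal.toReal_ofReal (Real.rpow_nonneg (hFnn ℓ) _),
    ← ENNReal.prod_ofReal_rpow _ (hFnn ℓ) fun k _ => (hα k).le]
  exact congrArg _ (Finset.prod_congr rfl fun k _ => by rw [← ofReal_cdf, hcdf k (le_refl ℓ)])

lemma measure_record_inter_gt_eq (hFmono : Monotone F) (hFcont : Continuous F)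
    (hFnn : ∀ x, 0 ≤ F x) (hα : ∀ n, 0 < α n) (hX : ∀ n, Measurable (X n))
    (hindep : iIndepFun X P)
    (hcdf : ∀ n, EqOn (cdf (P.map (X n))) (fun x => F x ^ α n) (Ici ℓ)) (m : ℕ) :
    P ({ω | ∀ j < m, X j ω < X m ω} ∩ {ω | ℓ < X m ω})
      = ENNReal.ofReal (α m / (∑ k ∈ Finset.range (m + 1), α k)
          * (1 - F ℓ ^ ∑ k ∈ Finset.range (m + 1), α k)) := by
  have hlaw (n : ℕ) := Measure.isProbabilityMeasure_map (μ := P) (hX n).aemeasurable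
  have hprod : ∀ z ∈ Ioi ℓ, ∏ j ∈ Finset.range m, P.map (X j) (Iio z)
      = ENNReal.ofReal (F z ^ ∑ j ∈ Finset.range m, α j) := fun z hz => by
    rw [← ENNReal.prod_ofReal_rpow _ (hFnn z) fun j _ => (hα j).le]
    exact Finset.prod_congr rfl fun j _ => measure_Iio_eq_ofReal_of_cdf_eventuallyEq
      (hFcont.rpow_const fun _ => Or.inr (hα j).le).continuousAt
      (eventuallyEq_of_mem (Ici_mem_nhds hz) (hcdf j))
  rw [hindep.measure_record_inter_gt_eq_lintegral hX,
    setLIntegral_congr_fun measurableSet_Ioi hprod,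
    lintegral_Ioi_ofReal_rpow_of_eqOn_cdf_rpow hFmono hFcont hFnn (hα m)
      (Finset.sum_nonneg fun k _ => (hα k).le) (hcdf m), ← Finset.sum_range_succ]

end Records

end ProbabilityTheory

lemma record_sdiff_gt_eq_inter_forall_le {Ω : Type*} (X : ℕ → Ω → ℝ) (m : ℕ) (ℓ : ℝ) :
    {ω | ∀ j < m, X j ω < X m ω} \ {ω | ℓ < X m ω}
      = {ω | ∀ j < m, X j ω < X m ω} ∩ {ω | ∀ k ≤ m, X k ω ≤ ℓ} := by
  ext ω
  simp only [Set.mem_sdiff, mem_inter_iff, mem_ofPred_eq, not_lt]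
  refine ⟨fun ⟨hA, hm⟩ => ⟨hA, fun k hk => ?_⟩, fun ⟨hA, hB⟩ => ⟨hA, hB m le_rfl⟩⟩
  rcases hk.lt_or_eq with hk | rfl
  exacts [(hA k hk).le.trans hm, hm]

lemma abs_mul_one_sub_add_sub_le {q h b : ℝ} (hq0 : 0 ≤ q) (hq1 : q ≤ 1) (hh : 0 ≤ h)
    (hb0 : 0 ≤ b) (hbh : b ≤ h) : |q * (1 - h) + b - q| ≤ h := by
  rw [abs_le]
  constructor <;> nlinarith

theorem flat_threshold_record_probability_general
    {Ω : Type*} [MeasurableSpace Ω] (P : Measure Ω) [IsProbabilityMeasure P]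
    (F : ℝ → ℝ) (hFmono : Monotone F) (hFcont : Continuous F)
    (hF0 : Tendsto F atBot (nhds 0))
    (α : ℕ → ℝ) (hα : ∀ n, 0 < α n) (ℓ : ℝ)
    (X : ℕ → Ω → ℝ) (hX : ∀ n, Measurable (X n))
    (hindep : iIndepFun X P)
    (hdf : ∀ n x, ℓ < x → (P {ω | X n ω ≤ x}).toReal = F x ^ α n)
    (m : ℕ) :
    (P {ω | ∀ j < m, X j ω < X m ω}).toReal
        = α m / (∑ k ∈ Finset.range (m + 1), α k)
            * (1 - F ℓ ^ (∑ k ∈ Finset.range (m + 1), α k))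
          + (P ({ω | ∀ j < m, X j ω < X m ω} ∩ {ω | ∀ k ≤ m, X k ω ≤ ℓ})).toReal ∧
    |(P {ω | ∀ j < m, X j ω < X m ω}).toReal
        - α m / (∑ k ∈ Finset.range (m + 1), α k)|
      ≤ F ℓ ^ (∑ k ∈ Finset.range (m + 1), α k) := by
  have hFnn : ∀ x, 0 ≤ F x := hFmono.le_of_tendsto hF0
  have hcdf n := eqOn_cdf_map_Ici_of_forall_gt
    (hFcont.rpow_const fun _ => Or.inr (hα n).le) (hX n) (hdf n)
  set s := ∑ k ∈ Finset.range (m + 1), α k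
  have hαs : α m ≤ s := Finset.single_le_sum (fun k _ => (hα k).le) (Finset.self_mem_range_succ m)
  have hs : 0 < s := (hα m).trans_le hαs
  have hbelow : P.real {ω | ∀ k ≤ m, X k ω ≤ ℓ} = F ℓ ^ s :=
    measureReal_forall_le_eq_rpow_sum hFnn hα hX hindep hcdf m
  have hsplit : P.real {ω | ∀ j < m, X j ω < X m ω} = α m / s * (1 - F ℓ ^ s)
      + P.real ({ω | ∀ j < m, X j ω < X m ω} ∩ {ω | ∀ k ≤ m, X k ω ≤ ℓ}) := by
    rw [← measureReal_inter_add_sdiff (measurableSet_lt measurable_const (hX m)),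
      record_sdiff_gt_eq_inter_forall_le, measureReal_def,
      measure_record_inter_gt_eq hFmono hFcont hFnn hα hX hindep hcdf, ENNReal.toReal_ofReal]
    exact mul_nonneg (div_nonneg (hα m).le hs.le) (sub_nonneg.2 (hbelow ▸ measureReal_le_one))
  refine ⟨hsplit, ?_⟩
  rw [← measureReal_def, hsplit]
  exact abs_mul_one_sub_add_sub_le (div_nonneg (hα m).le hs.le) ((div_le_one hs).2 hαs)
    (Real.rpow_nonneg (hFnn ℓ) s) measureReal_nonneg
    (hbelow ▸ measureReal_mono inter_subset_right)

/-- Lemma 1 (first part) of the paper: in a flat-threshold `F^α`-scheme with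
independent `X n` whose distribution functions agree with `F^{α n}` above `ℓ`,
setting `h = F ℓ`, `s m = α 0 + ... + α m`, `b m = P(I m = 1, M m ≤ ℓ)`, one has
`P(I m = 1) = (α m / s m)(1 − h^{s m}) + b m` and hence
`|P(I m = 1) − α m / s m| ≤ h^{s m}`. -/
theorem flat_threshold_record_probability
    {Ω : Type*} [MeasurableSpace Ω] (P : Measure Ω) [IsProbabilityMeasure P]
    (F : ℝ → ℝ) (hFmono : Monotone F) (hFcont : Continuous F)
    (hF0 : Tendsto F atBot (nhds 0)) (hF1 : Tendsto F atTop (nhds 1))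
    (α : ℕ → ℝ) (hα : ∀ n, 0 < α n) (ℓ : ℝ) (hh : F ℓ < 1)
    (X : ℕ → Ω → ℝ) (hX : ∀ n, Measurable (X n))
    (hindep : iIndepFun X P)
    (hdf : ∀ n x, ℓ < x → (P {ω | X n ω ≤ x}).toReal = F x ^ α n)
    (m : ℕ) :
    (P {ω | ∀ j < m, X j ω < X m ω}).toReal
        = α m / (∑ k ∈ Finset.range (m + 1), α k)
            * (1 - F ℓ ^ (∑ k ∈ Finset.range (m + 1), α k))
          + (P ({ω | ∀ j < m, X j ω < X m ω} ∩ {ω | ∀ k ≤ m, X k ω ≤ ℓ})).toReal ∧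
    |(P {ω | ∀ j < m, X j ω < X m ω}).toReal
        - α m / (∑ k ∈ Finset.range (m + 1), α k)|
      ≤ F ℓ ^ (∑ k ∈ Finset.range (m + 1), α k) :=
  flat_threshold_record_probability_general P F hFmono hFcont hF0 α hα ℓ X hX hindep hdf m
end

section
/- Exact computation of the joint record probability in an F^α-scheme above a threshold: for n > m ≥ 1, with Xc_1,...,Xc_n independent, Xc_k ~ F^{α_k}, F continuous, h = F(ℓ), s_k = α_1+...+α_k, one has P(Ic_m = Ic_n = 1, Mc_m > ℓ) = [α_m α_n/(s_n − s_m)] · [ (1 − h^{s_m})/s_m − (1 − h^{s_n})/s_n ]. -/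
/-!
Condition on the two record values `x = Xc m` and `y = Xc n`. The other variables are independent
of them, so the event contributes `F x ^ ∑_{j<m} α j` and `F y ^ ∑_{m<j<n} α j` (strict and weak
inequalities agree because the laws have no atoms). Since `F` is continuous, the probability
integral transform sends the law of `Xc k` to the law on `(0, 1]` with distribution function
`u ^ α k`, which turns the double integral over `ℓ < x < y` into the elementary one over
`h < u < v ≤ 1`.
-/

open MeasureTheory ProbabilityTheory Filter Set
open scoped ENNReal Topology

theorem sum_range_add_one_eq_add_sum_Ioo {M : Type*} [AddCommMonoid M] (f : ℕ → M) {m n : ℕ}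
    (hmn : m < n) :
    ∑ k ∈ Finset.range (n + 1), f k
      = ∑ k ∈ Finset.range (m + 1), f k + (f n + ∑ k ∈ Finset.Ioo m n, f k) := by
  rw [Finset.sum_range_succ, ← Finset.sum_range_add_sum_Ico f hmn, Nat.succ_eq_add_one,
    Finset.Ico_add_one_left_eq_Ioo]
  abel

theorem integral_rpow_sub_one {s : ℝ} (hs : 0 < s) (c d : ℝ) :
    ∫ v in c..d, v ^ (s - 1) = (d ^ s - c ^ s) / s := by
  rw [integral_rpow (Or.inl (by linarith)), sub_add_cancel]

theorem integral_mul_rpow_sub_one_mul_rpow {a r u : ℝ} (ha : 0 < a) (hr : 0 ≤ r) (hu0 : 0 ≤ u)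
    (hu1 : u ≤ 1) :
    ∫ v in u..1, a * v ^ (a - 1) * v ^ r = a * (1 - u ^ (a + r)) / (a + r) := by
  have hv : EqOn (fun v => a * v ^ (a - 1) * v ^ r) (fun v => a * v ^ (a + r - 1)) (Ioo u 1) :=
    fun v hv => by
      simp only [mul_assoc, ← Real.rpow_add (hu0.trans_lt hv.1)]
      ring_nf
  rw [intervalIntegral.integral_congr_Ioo_of_le hu1 hv, intervalIntegral.integral_const_mul,
    integral_rpow_sub_one (by linarith), Real.one_rpow, mul_div_assoc]

theorem integral_mul_rpow_sub_one_mul_rpow_mul_one_sub_rpow {a p d b h : ℝ} (ha : 0 < a)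
    (hp : 0 ≤ p) (hd : 0 < d) (hh0 : 0 ≤ h) (hh1 : h ≤ 1) :
    ∫ v in h..1, a * v ^ (a - 1) * (v ^ p * (b * (1 - v ^ d) / d))
      = a * b / d * ((1 - h ^ (a + p)) / (a + p) - (1 - h ^ (a + p + d)) / (a + p + d)) := by
  have hv : EqOn (fun v => a * v ^ (a - 1) * (v ^ p * (b * (1 - v ^ d) / d)))
      (fun v => a * b / d * (v ^ (a + p - 1) - v ^ (a + p + d - 1))) (Ioo h 1) := fun v hv => by
    have hv0 : 0 < v := hh0.trans_lt hv.1
    dsimp only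
    rw [show a + p - 1 = a - 1 + p by ring, show a + p + d - 1 = a - 1 + p + d by ring,
      Real.rpow_add hv0, Real.rpow_add hv0, Real.rpow_add hv0]
    field_simp
  rw [intervalIntegral.integral_congr_Ioo_of_le hh1 hv, intervalIntegral.integral_const_mul,
    intervalIntegral.integral_sub (intervalIntegral.intervalIntegrable_rpow' (by linarith))
      (intervalIntegral.intervalIntegrable_rpow' (by linarith)),
    integral_rpow_sub_one (by linarith), integral_rpow_sub_one (by linarith), Real.one_rpow,
    Real.one_rpow]

theorem setLIntegral_Ioc_ofReal_mul_rpow {a c d : ℝ} (ha : 0 < a) (hc : 0 ≤ c) (hcd : c ≤ d)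
    {f : ℝ → ℝ} (hf : ContinuousOn f (Icc c d)) (hf0 : ∀ v ∈ Ioc c d, 0 ≤ f v) :
    ∫⁻ v in Ioc c d, ENNReal.ofReal (a * v ^ (a - 1)) * ENNReal.ofReal (f v)
      = ENNReal.ofReal (∫ v in c..d, a * v ^ (a - 1) * f v) := by
  have hint : IntegrableOn (fun v => a * v ^ (a - 1)) (Ioc c d) :=
    (intervalIntegrable_iff_integrableOn_Ioc_of_le hcd).1
      ((intervalIntegral.intervalIntegrable_rpow' (by linarith)).const_mul a)
  have hpos : ∀ v ∈ Ioc c d, 0 ≤ a * v ^ (a - 1) := fun v hv =>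
    mul_nonneg ha.le (Real.rpow_nonneg (hc.trans hv.1.le) _)
  rw [intervalIntegral.integral_of_le hcd, ofReal_integral_eq_lintegral_ofReal
    (hint.mul_continuousOn_of_subset hf measurableSet_Ioc isCompact_Icc Ioc_subset_Icc_self)
    ((ae_restrict_iff' measurableSet_Ioc).2 (.of_forall fun v hv =>
      mul_nonneg (hpos v hv) (hf0 v hv)))]
  refine setLIntegral_congr_fun measurableSet_Ioc fun v hv => ?_
  rw [ENNReal.ofReal_mul (hpos v hv)]

noncomputable def powerLaw (a : ℝ) : Measure ℝ :=
  (volume.restrict (Ioc 0 1)).withDensity fun v => ENNReal.ofReal (a * v ^ (a - 1))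

instance nullSingletonClass_powerLaw (a : ℝ) : NullSingletonClass (powerLaw a) := by
  unfold powerLaw
  infer_instance

theorem setLIntegral_powerLaw (a : ℝ) {s : Set ℝ} (hs : MeasurableSet s) {g : ℝ → ℝ≥0∞}
    (hg : Measurable g) :
    ∫⁻ v in s, g v ∂powerLaw a
      = ∫⁻ v in s ∩ Ioc 0 1, ENNReal.ofReal (a * v ^ (a - 1)) * g v := by
  rw [powerLaw, setLIntegral_withDensity_eq_setLIntegral_mul _ (by fun_prop) hg hs,
    Measure.restrict_restrict' measurableSet_Ioc]
  rfl

theorem powerLaw_Iic {a u : ℝ} (ha : 0 < a) (hu0 : 0 ≤ u) (hu1 : u ≤ 1) :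
    powerLaw a (Iic u) = ENNReal.ofReal (u ^ a) := by
  rw [← setLIntegral_one, setLIntegral_powerLaw a measurableSet_Iic measurable_const,
    inter_comm, Ioc_inter_Iic, min_eq_right hu1, ← ENNReal.ofReal_one,
    setLIntegral_Ioc_ofReal_mul_rpow ha le_rfl hu0 continuousOn_const fun _ _ => zero_le_one]
  simp_rw [mul_one]
  rw [intervalIntegral.integral_const_mul, integral_rpow_sub_one ha,
    Real.zero_rpow ha.ne', sub_zero, mul_div_cancel₀ _ ha.ne']

theorem isProbabilityMeasure_powerLaw {a : ℝ} (ha : 0 < a) :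
    IsProbabilityMeasure (powerLaw a) := by
  constructor
  calc powerLaw a univ = powerLaw a (Iic 1) := by
        rw [← setLIntegral_one, ← setLIntegral_one (s := Iic 1),
          setLIntegral_powerLaw a .univ measurable_const,
          setLIntegral_powerLaw a measurableSet_Iic measurable_const, univ_inter,
          inter_eq_right.2 Ioc_subset_Iic_self]
    _ = 1 := by rw [powerLaw_Iic ha zero_le_one le_rfl, Real.one_rpow, ENNReal.ofReal_one]

theorem setLIntegral_powerLaw_Ioi {a u : ℝ} (ha : 0 < a) (hu0 : 0 ≤ u) (hu1 : u ≤ 1)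
    {f : ℝ → ℝ} (hf : Continuous f) (hf0 : ∀ v ∈ Ioc u 1, 0 ≤ f v) :
    ∫⁻ v in Ioi u, ENNReal.ofReal (f v) ∂powerLaw a
      = ENNReal.ofReal (∫ v in u..1, a * v ^ (a - 1) * f v) := by
  rw [setLIntegral_powerLaw a measurableSet_Ioi (by fun_prop), inter_comm, Ioc_inter_Ioi,
    max_eq_right hu0, setLIntegral_Ioc_ofReal_mul_rpow ha hu0 hu1 hf.continuousOn hf0]

theorem map_eq_of_measure_Iic_eq {μ ν : Measure ℝ} [IsProbabilityMeasure μ]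
    [IsProbabilityMeasure ν] {F : ℝ → ℝ} (hFmono : Monotone F) (hFcont : Continuous F)
    (h : ∀ x, μ (Iic x) = ν (Iic (F x))) : μ.map F = ν := by
  have : IsProbabilityMeasure (μ.map F) :=
    Measure.isProbabilityMeasure_map hFcont.measurable.aemeasurable
  refine Measure.ext_of_Iic _ _ fun u => ?_
  rw [Measure.map_apply hFcont.measurable measurableSet_Iic]
  set S := F ⁻¹' Iic u
  -- `S` is a closed lower set: empty, all of `ℝ`, or `Iic b` with `F b = u`.
  have hlow : IsLowerSet S := (isLowerSet_Iic u).preimage hFmono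
  rcases S.eq_empty_or_nonempty with hS | hS
  · have hle : ∀ y, ν (Iic u) ≤ μ (Iic y) := fun y =>
      h y ▸ measure_mono (Iic_subset_Iic.2 (not_le.1 fun hy => hS.subset hy).le)
    have hbot : Tendsto (fun y => μ (Iic y)) atBot (𝓝 0) := by
      simpa [Function.comp_def, ofReal_cdf] using
        (ENNReal.continuous_ofReal.tendsto 0).comp (tendsto_cdf_atBot (μ := μ))
    rw [hS, measure_empty, eq_comm, ← nonpos_iff_eq_zero]
    exact ge_of_tendsto' hbot hle
  by_cases hbdd : BddAbove S
  · have hclosed : IsClosed S := isClosed_Iic.preimage hFcont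
    have hSb : S = Iic (sSup S) := by
      rw [← lowerClosure_eq_Iic_csSup hS hbdd hclosed, hlow.lowerClosure]
    have hFb : u ≤ F (sSup S) := by
      refine ge_of_tendsto (hFcont.continuousWithinAt (s := Ioi (sSup S))) ?_
      filter_upwards [self_mem_nhdsWithin] with y hy
      exact (not_le.1 fun hyS => (not_le.2 hy) (le_csSup hbdd hyS)).le
    rw [hSb, h, le_antisymm (hclosed.csSup_mem hS hbdd) hFb]
  · have hSu : S = univ := eq_univ_of_forall fun z => by
      obtain ⟨y, hy, hzy⟩ := not_bddAbove_iff.1 hbdd z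
      exact hlow hzy.le hy
    have hge : ∀ y, μ (Iic y) ≤ ν (Iic u) := fun y =>
      h y ▸ measure_mono (Iic_subset_Iic.2 (hSu ▸ mem_univ y : y ∈ S))
    rw [hSu, measure_univ]
    refine le_antisymm ?_ prob_le_one
    rw [← measure_univ (μ := μ)]
    exact le_of_tendsto' (tendsto_measure_Iic_atTop μ) hge

theorem map_eq_powerLaw {μ : Measure ℝ} [IsProbabilityMeasure μ] {F : ℝ → ℝ}
    (hFmono : Monotone F) (hFcont : Continuous F) (hF0 : ∀ x, 0 ≤ F x) (hF1 : ∀ x, F x ≤ 1)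
    {a : ℝ} (ha : 0 < a) (h : ∀ x, μ (Iic x) = ENNReal.ofReal (F x ^ a)) :
    μ.map F = powerLaw a :=
  have := isProbabilityMeasure_powerLaw ha
  map_eq_of_measure_Iic_eq hFmono hFcont fun x =>
    (h x).trans (powerLaw_Iic ha (hF0 x) (hF1 x)).symm

theorem MeasureTheory.NullSingletonClass.of_map {α β : Type*} [MeasurableSpace α]
    [MeasurableSpace β] [MeasurableSingletonClass β] {μ : Measure α} {f : α → β}
    (hf : Measurable f) [NullSingletonClass (μ.map f)] : NullSingletonClass μ where
  measure_singleton x := measure_mono_null (t := f ⁻¹' {f x}) (fun y hy => by rw [hy]; rfl)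
    (by rw [← Measure.map_apply hf (measurableSet_singleton _)]; exact measure_singleton _)

theorem setLIntegral_Ioi_comp_of_map_eq {μ ν : Measure ℝ} [NullSingletonClass ν] {F : ℝ → ℝ}
    (hFmono : Monotone F) (hFm : Measurable F) (hmap : μ.map F = ν) {φ : ℝ → ℝ≥0∞}
    (hφ : Measurable φ) (x : ℝ) :
    ∫⁻ y in Ioi x, φ (F y) ∂μ = ∫⁻ v in Ioi (F x), φ v ∂ν := by
  have hnull : ∀ᵐ y ∂μ, F y ≠ F x := by
    refine (measure_eq_zero_iff_ae_notMem (s := F ⁻¹' {F x})).1 ?_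
    rw [← Measure.map_apply hFm (measurableSet_singleton _), hmap, measure_singleton]
  rw [← hmap, setLIntegral_map measurableSet_Ioi hφ hFm]
  refine setLIntegral_congr ?_
  filter_upwards [hnull] with y hy
  simp only [eq_iff_iff]
  exact ⟨fun hxy => (hFmono hxy.le).lt_of_ne' hy, hFmono.reflect_lt⟩

theorem setLIntegral_Ioi_comp_eq_integral {μ : Measure ℝ} {F : ℝ → ℝ} (hFmono : Monotone F)
    (hFcont : Continuous F) {a : ℝ} (ha : 0 < a) (hmap : μ.map F = powerLaw a) {x : ℝ}
    (hx0 : 0 ≤ F x) (hx1 : F x ≤ 1) {f : ℝ → ℝ} (hf : Continuous f)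
    (hf0 : ∀ v ∈ Ioc (F x) 1, 0 ≤ f v) :
    ∫⁻ y in Ioi x, ENNReal.ofReal (f (F y)) ∂μ
      = ENNReal.ofReal (∫ v in F x..1, a * v ^ (a - 1) * f v) := by
  rw [setLIntegral_Ioi_comp_of_map_eq (φ := fun v => ENNReal.ofReal (f v)) hFmono
      hFcont.measurable hmap (by fun_prop) x,
    setLIntegral_powerLaw_Ioi ha hx0 hx1 hf hf0]

theorem setLIntegral_Ioi_rpow_of_map_eq_powerLaw {μ : Measure ℝ} {F : ℝ → ℝ}
    (hFmono : Monotone F) (hFcont : Continuous F) {a : ℝ} (ha : 0 < a)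
    (hmap : μ.map F = powerLaw a) {x : ℝ} (hx0 : 0 ≤ F x) (hx1 : F x ≤ 1) {r : ℝ} (hr : 0 ≤ r) :
    ∫⁻ y in Ioi x, ENNReal.ofReal (F y ^ r) ∂μ
      = ENNReal.ofReal (a * (1 - F x ^ (a + r)) / (a + r)) := by
  rw [setLIntegral_Ioi_comp_eq_integral (f := fun v => v ^ r) hFmono hFcont ha hmap hx0 hx1
      (Real.continuous_rpow_const hr) fun v hv => Real.rpow_nonneg (hx0.trans hv.1.le) _,
    integral_mul_rpow_sub_one_mul_rpow ha hr hx0 hx1]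

theorem prod_measure_Iio_eq_ofReal_rpow_sum {ι : Type*} {μ : ι → Measure ℝ}
    [∀ j, NullSingletonClass (μ j)] {F : ℝ → ℝ} {α : ι → ℝ}
    (hμ : ∀ j x, μ j (Iic x) = ENNReal.ofReal (F x ^ α j)) {s : Finset ι}
    (hα : ∀ j ∈ s, 0 ≤ α j) {x : ℝ} (hx : 0 ≤ F x) :
    ∏ j ∈ s, μ j (Iio x) = ENNReal.ofReal (F x ^ ∑ j ∈ s, α j) := by
  rw [Real.rpow_sum_of_nonneg hx hα,
    ENNReal.ofReal_prod_of_nonneg fun j _ => Real.rpow_nonneg hx _]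
  exact Finset.prod_congr rfl fun j _ => (measure_congr Iio_ae_eq_Iic).trans (hμ j x)

theorem setLIntegral_prod_setOf_lt {μ ν : Measure ℝ} [SFinite μ] [SFinite ν]
    {f : ℝ × ℝ → ℝ≥0∞} (hf : Measurable f) (ℓ : ℝ) :
    ∫⁻ w in {w : ℝ × ℝ | ℓ < w.1 ∧ w.1 < w.2}, f w ∂μ.prod ν
      = ∫⁻ x in Ioi ℓ, ∫⁻ y in Ioi x, f (x, y) ∂ν ∂μ := by
  have hD : MeasurableSet {w : ℝ × ℝ | ℓ < w.1 ∧ w.1 < w.2} :=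
    (measurableSet_lt measurable_const measurable_fst).inter
      (measurableSet_lt measurable_fst measurable_snd)
  rw [← lintegral_indicator hD, lintegral_prod _ (hf.indicator hD).aemeasurable,
    ← lintegral_indicator measurableSet_Ioi]
  congr 1
  funext x
  by_cases hx : ℓ < x
  · rw [indicator_of_mem (mem_Ioi.2 hx), ← lintegral_indicator measurableSet_Ioi]
    congr 1
    funext y
    simp [indicator, hx]
  · simp [indicator, hx]

theorem toReal_setLIntegral_jointRecord {μ : ℕ → Measure ℝ} [∀ j, IsProbabilityMeasure (μ j)]
    {F : ℝ → ℝ} (hFmono : Monotone F) (hFcont : Continuous F) (hF0 : ∀ x, 0 ≤ F x)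
    (hF1 : ∀ x, F x ≤ 1) {α : ℕ → ℝ} (hα : ∀ k, 0 < α k)
    (hμ : ∀ j x, μ j (Iic x) = ENNReal.ofReal (F x ^ α j)) {m n : ℕ} (hmn : m < n) (ℓ : ℝ) :
    (∫⁻ w in {w : ℝ × ℝ | ℓ < w.1 ∧ w.1 < w.2},
        (∏ j ∈ Finset.range m, μ j (Iio w.1)) * ∏ j ∈ Finset.Ioo m n, μ j (Iio w.2)
        ∂(μ m).prod (μ n)).toReal
      = α m * α n
          / ((∑ k ∈ Finset.range (n + 1), α k) - ∑ k ∈ Finset.range (m + 1), α k)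
        * ((1 - F ℓ ^ (∑ k ∈ Finset.range (m + 1), α k))
              / (∑ k ∈ Finset.range (m + 1), α k)
           - (1 - F ℓ ^ (∑ k ∈ Finset.range (n + 1), α k))
              / (∑ k ∈ Finset.range (n + 1), α k)) := by
  have hmap : ∀ j, (μ j).map F = powerLaw (α j) := fun j =>
    map_eq_powerLaw hFmono hFcont hF0 hF1 (hα j) (hμ j)
  have : ∀ j, NullSingletonClass (μ j) := fun j =>
    have : NullSingletonClass ((μ j).map F) := hmap j ▸ inferInstance
    NullSingletonClass.of_map hFcont.measurable
  simp_rw [prod_measure_Iio_eq_ofReal_rpow_sum hμ (fun j _ => (hα j).le) (hF0 _)]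
  rw [setLIntegral_prod_setOf_lt (by fun_prop) ℓ]
  dsimp only
  set p := ∑ j ∈ Finset.range m, α j
  set q := ∑ j ∈ Finset.Ioo m n, α j
  have hp : 0 ≤ p := Finset.sum_nonneg fun j _ => (hα j).le
  have hq : 0 ≤ q := Finset.sum_nonneg fun j _ => (hα j).le
  have hd : 0 < α n + q := by linarith [hα n]
  have hSm : ∑ k ∈ Finset.range (m + 1), α k = α m + p := by
    rw [Finset.sum_range_succ, add_comm]
  have hSn : ∑ k ∈ Finset.range (n + 1), α k = α m + p + (α n + q) := by
    rw [sum_range_add_one_eq_add_sum_Ioo α hmn, hSm]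
  have hf0 : ∀ v ∈ Icc (F ℓ) 1, 0 ≤ v ^ p * (α n * (1 - v ^ (α n + q)) / (α n + q)) :=
    fun v hv => have hv0 : 0 ≤ v := (hF0 ℓ).trans hv.1
      mul_nonneg (Real.rpow_nonneg hv0 _) (div_nonneg (mul_nonneg (hα n).le
        (sub_nonneg.2 (Real.rpow_le_one hv0 hv.2 hd.le))) hd.le)
  simp_rw [lintegral_const_mul _ (hFcont.measurable.pow_const q).ennreal_ofReal,
    setLIntegral_Ioi_rpow_of_map_eq_powerLaw hFmono hFcont (hα n) (hmap n) (hF0 _) (hF1 _) hq,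
    ← ENNReal.ofReal_mul (Real.rpow_nonneg (hF0 _) _)]
  rw [setLIntegral_Ioi_comp_eq_integral
      (f := fun v => v ^ p * (α n * (1 - v ^ (α n + q)) / (α n + q))) hFmono hFcont (hα m)
      (hmap m) (hF0 ℓ) (hF1 ℓ) (by fun_prop (disch := first | exact hp | exact hd.le))
      fun v hv => hf0 v (Ioc_subset_Icc_self hv),
    ENNReal.toReal_ofReal (intervalIntegral.integral_nonneg (hF1 ℓ) fun v hv =>
      mul_nonneg (mul_nonneg (hα m).le (Real.rpow_nonneg ((hF0 ℓ).trans hv.1) _)) (hf0 v hv)),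
    integral_mul_rpow_sub_one_mul_rpow_mul_one_sub_rpow (hα m) hp hd (hF0 ℓ) (hF1 ℓ), hSm, hSn,
    add_sub_cancel_left]

theorem ProbabilityTheory.IndepFun.measure_preimage_eq_lintegral {Ω α β : Type*}
    [MeasurableSpace Ω] [MeasurableSpace α] [MeasurableSpace β] {P : Measure Ω}
    [IsFiniteMeasure P] {Y : Ω → α} {Z : Ω → β} (hYZ : IndepFun Y Z P) (hY : Measurable Y)
    (hZ : Measurable Z) {S : Set (α × β)} (hS : MeasurableSet S) :
    P ((fun ω => (Y ω, Z ω)) ⁻¹' S) = ∫⁻ y, P (Z ⁻¹' (Prod.mk y ⁻¹' S)) ∂P.map Y := by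
  rw [← Measure.map_apply (hY.prodMk hZ) hS,
    hYZ.map_prod_eq_prod_map_map hY.aemeasurable hZ.aemeasurable, Measure.prod_apply hS]
  exact lintegral_congr fun y => Measure.map_apply hZ (measurable_prodMk_left hS)

theorem jointRecordEvent_eq {Ω : Type*} (X : ℕ → Ω → ℝ) (ℓ : ℝ) {m n : ℕ} (hmn : m < n) :
    {ω | ∀ j < m, X j ω < X m ω} ∩ {ω | ∀ j < n, X j ω < X n ω}
        ∩ {ω | ℓ < (Finset.range (m + 1)).sup' (by simp) fun k => X k ω}
      = {ω | ℓ < X m ω ∧ X m ω < X n ω ∧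
          ∀ j ∈ Finset.range m ∪ Finset.Ioo m n, X j ω < if j < m then X m ω else X n ω} := by
  ext ω
  simp only [mem_inter_iff, mem_ofPred_eq, Finset.lt_sup'_iff, Finset.mem_range,
    Finset.mem_union, Finset.mem_Ioo]
  constructor
  · rintro ⟨⟨hm, hn⟩, k, hk, hℓ⟩
    refine ⟨hℓ.trans_le ?_, hn m hmn, fun j hj => ?_⟩
    · rcases (Nat.lt_succ_iff.1 hk).lt_or_eq with hkm | rfl
      exacts [(hm k hkm).le, le_rfl]
    · split_ifs with hjm
      exacts [hm j hjm, hn j (by omega)]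
  · rintro ⟨hℓ, hmn', h⟩
    refine ⟨⟨fun j hj => by simpa [hj] using h j (.inl hj), fun j hj => ?_⟩, m, by omega, hℓ⟩
    rcases lt_trichotomy j m with hjm | rfl | hjm
    · exact (by simpa [hjm] using h j (.inl hjm) : X j ω < X m ω).trans hmn'
    · exact hmn'
    · simpa [hjm.not_gt] using h j (.inr ⟨hjm, hj⟩)

theorem measure_jointRecordEvent_eq_setLIntegral {Ω : Type*} [MeasurableSpace Ω]
    {P : Measure Ω} [IsProbabilityMeasure P] {X : ℕ → Ω → ℝ} (hX : ∀ k, Measurable (X k))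
    (hindep : iIndepFun X P) (ℓ : ℝ) {m n : ℕ} (hmn : m < n) :
    P {ω | ℓ < X m ω ∧ X m ω < X n ω ∧
          ∀ j ∈ Finset.range m ∪ Finset.Ioo m n, X j ω < if j < m then X m ω else X n ω}
      = ∫⁻ w in {w : ℝ × ℝ | ℓ < w.1 ∧ w.1 < w.2},
          (∏ j ∈ Finset.range m, P.map (X j) (Iio w.1))
            * ∏ j ∈ Finset.Ioo m n, P.map (X j) (Iio w.2) ∂(P.map (X m)).prod (P.map (X n)) := by
  set t := Finset.range m ∪ Finset.Ioo m n
  set D := {w : ℝ × ℝ | ℓ < w.1 ∧ w.1 < w.2}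
  have hdisj : Disjoint ({m, n} : Finset ℕ) t := by
    simp [t, Finset.disjoint_left]
    omega
  have hWR : IndepFun (fun ω => (X m ω, X n ω)) (fun ω (j : t) => X j ω) P :=
    (hindep.indepFun_finset {m, n} t hdisj hX).comp
      (φ := fun v => (v ⟨m, by simp⟩, v ⟨n, by simp⟩)) (ψ := id)
      ((measurable_pi_apply _).prodMk (measurable_pi_apply _)) measurable_id
  have hlaw : P.map (fun ω => (X m ω, X n ω)) = (P.map (X m)).prod (P.map (X n)) :=
    (hindep.indepFun hmn.ne).map_prod_eq_prod_map_map (hX m).aemeasurable (hX n).aemeasurable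
  have hD : MeasurableSet D :=
    (measurableSet_lt measurable_const measurable_fst).inter
      (measurableSet_lt measurable_fst measurable_snd)
  let S : Set ((ℝ × ℝ) × (t → ℝ)) :=
    Prod.fst ⁻¹' D ∩ ⋂ j : t, {p | p.2 j < if (j : ℕ) < m then p.1.1 else p.1.2}
  have hS : MeasurableSet S := (hD.preimage measurable_fst).inter <|
    .iInter fun j => measurableSet_lt (by fun_prop) (by split_ifs <;> fun_prop)
  have hE : {ω | ℓ < X m ω ∧ X m ω < X n ω ∧ ∀ j ∈ t, X j ω < if j < m then X m ω else X n ω}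
      = (fun ω => ((X m ω, X n ω), fun j : t => X j ω)) ⁻¹' S := by
    ext ω
    simp [S, D, and_assoc]
  rw [hE, hWR.measure_preimage_eq_lintegral (by fun_prop) (by fun_prop) hS, hlaw,
    ← lintegral_indicator hD]
  refine lintegral_congr fun w => ?_
  by_cases hw : w ∈ D
  · have hslice : (fun ω (j : t) => X j ω) ⁻¹' (Prod.mk w ⁻¹' S)
        = ⋂ j ∈ t, X j ⁻¹' Iio (if j < m then w.1 else w.2) := by
      ext ω
      simp [S, hw]
    rw [indicator_of_mem hw, hslice,
      hindep.measure_inter_preimage_eq_mul t fun j _ => measurableSet_Iio,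
      Finset.prod_union (by simp [Finset.disjoint_left]; omega)]
    congr 1 <;> refine Finset.prod_congr rfl fun j hj => ?_ <;>
      simp only [Finset.mem_range, Finset.mem_Ioo] at hj <;>
      rw [Measure.map_apply (hX j) measurableSet_Iio]
    · rw [if_pos hj]
    · rw [if_neg (by omega)]
  · have hslice : Prod.mk w ⁻¹' S = ∅ := by
      ext r
      simp [S, hw]
    rw [indicator_of_notMem hw, hslice, preimage_empty, measure_empty]

/-- Joint record probability above a threshold in a genuine `F^α`-scheme: for
`m < n`, `h = F ℓ`, `s k = α 0 + ... + α k`,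
`P(Ic m = Ic n = 1, Mc m > ℓ)
  = (α m · α n)/(s n − s m) · ((1 − h^{s m})/s m − (1 − h^{s n})/s n)`. -/
theorem falpha_joint_record_probability
    {Ω : Type*} [MeasurableSpace Ω] (P : Measure Ω) [IsProbabilityMeasure P]
    (F : ℝ → ℝ) (hFmono : Monotone F) (hFcont : Continuous F)
    (hF0 : Tendsto F atBot (nhds 0)) (hF1 : Tendsto F atTop (nhds 1))
    (α : ℕ → ℝ) (hα : ∀ k, 0 < α k) (ℓ : ℝ)
    (X : ℕ → Ω → ℝ) (hX : ∀ k, Measurable (X k))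
    (hindep : iIndepFun X P)
    (hdist : ∀ k x, (P {ω | X k ω ≤ x}).toReal = F x ^ α k)
    (m n : ℕ) (hmn : m < n) :
    (P ({ω | ∀ j < m, X j ω < X m ω} ∩ {ω | ∀ j < n, X j ω < X n ω}
        ∩ {ω | ℓ < (Finset.range (m + 1)).sup' (by simp) fun k => X k ω})).toReal
      = α m * α n
          / ((∑ k ∈ Finset.range (n + 1), α k) - ∑ k ∈ Finset.range (m + 1), α k)
        * ((1 - F ℓ ^ (∑ k ∈ Finset.range (m + 1), α k))
              / (∑ k ∈ Finset.range (m + 1), α k)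
           - (1 - F ℓ ^ (∑ k ∈ Finset.range (n + 1), α k))
              / (∑ k ∈ Finset.range (n + 1), α k)) := by
  have : ∀ k, IsProbabilityMeasure (P.map (X k)) := fun k =>
    Measure.isProbabilityMeasure_map (hX k).aemeasurable
  have hcdf : ∀ k x, P.map (X k) (Iic x) = ENNReal.ofReal (F x ^ α k) := fun k x => by
    rw [Measure.map_apply (hX k) measurableSet_Iic, ← hdist k x,
      ENNReal.ofReal_toReal (measure_ne_top P _)]
    rfl
  rw [jointRecordEvent_eq X ℓ hmn, measure_jointRecordEvent_eq_setLIntegral hX hindep ℓ hmn]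
  exact toReal_setLIntegral_jointRecord hFmono hFcont (hFmono.le_of_tendsto hF0)
    (hFmono.ge_of_tendsto hF1) hα hcdf hmn ℓ
end
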